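/- Any four points in ℝ², not all collinear, determine at least two distinct angle values in (0,π); equivalently P(1) = 3. -/

import Mathlib

open EuclideanGeometry

noncomputable section

abbrev Pt : Type := EuclideanSpace ℝ (Fin 2)

/-- The point (x, y) in the Euclidean plane. -/
def pt (x y : ℝ) : Pt := (WithLp.equiv 2 (Fin 2 → ℝ)).symm ![x, y]

/-- The set of distinct angle values in (0, π) determined by a planar point set. -/
def angleSet (P : Set Pt) : Set ℝ :=
  {θ : ℝ | θ ∈ Set.Ioo 0 Real.pi ∧
    ∃ x ∈ P, ∃ y ∈ P, ∃ z ∈ P, x ≠ y ∧ y ≠ z ∧ x ≠ z ∧ ∠ x y z = θ}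

/-!
If four non-collinear points determined at most one angle value, every non-degenerate triangle
among them would have three equal angles, all equal to `π / 3`. No three of the points can then
be collinear: the fourth point would see the middle one of them under two supplementary angles.
So every triangle among the four points is equilateral, and four pairwise equidistant points do
not fit in the plane.
-/

open Module Real

section Plane

variable {V : Type*} [NormedAddCommGroup V] [InnerProductSpace ℝ V]

lemma norm_add_sq_eq_three_mul_sq {x y : V} {r : ℝ} (hx : ‖x‖ = r) (hy : ‖y‖ = r)
    (hxy : ‖x - y‖ = r) : ‖x + y‖ ^ 2 = 3 * r ^ 2 := by
  have hadd := norm_add_sq_real x y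
  have hsub := norm_sub_sq_real x y
  rw [hx, hy, hxy] at hsub
  rw [hadd, hx, hy]
  linarith

/-- The point reflection `a + b - c` of `c` through the midpoint of `ab` lies on both circles
through `c` and `d` centred at `a` and `b`, so in the plane it is `c` or `d`; the parallelogram
law rules out both. -/
lemma false_of_four_equidistant [FiniteDimensional ℝ V] (hV : finrank ℝ V = 2) {a b c d : V}
    (hab : a ≠ b) (hac : dist a c = dist a b) (had : dist a d = dist a b)
    (hbc : dist b c = dist a b) (hbd : dist b d = dist a b) (hcd : dist c d = dist a b) :
    False := by
  set r := dist a b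
  have hr : r ≠ 0 := dist_ne_zero.2 hab
  have hcd' : c ≠ d := by rintro rfl; simp [eq_comm, hr] at hcd
  have hsum : ‖(a - c) + (b - c)‖ ^ 2 = 3 * r ^ 2 := by
    refine norm_add_sq_eq_three_mul_sq ?_ ?_ ?_
    · rw [← dist_eq_norm, hac]
    · rw [← dist_eq_norm, hbc]
    · rw [sub_sub_sub_cancel_right, ← dist_eq_norm]
  have hpa : dist (a + b - c) a = r := by
    rw [dist_eq_norm, show a + b - c - a = b - c by abel, ← dist_eq_norm, hbc]
  have hpb : dist (a + b - c) b = r := by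
    rw [dist_eq_norm, show a + b - c - b = a - c by abel, ← dist_eq_norm, hac]
  rcases eq_of_dist_eq_of_dist_eq_of_finrank_eq_two hV hab hcd' (dist_comm c a ▸ hac)
      (dist_comm d a ▸ had) hpa (dist_comm c b ▸ hbc) (dist_comm d b ▸ hbd) hpb with h | h
  · rw [show a - c + (b - c) = 0 by rw [← sub_eq_zero.2 h]; abel] at hsum
    simp [hr] at hsum
  · rw [show a - c + (b - c) = d - c by rw [← h]; abel, ← dist_eq_norm, dist_comm, hcd] at hsum
    exact hr (by nlinarith)

lemma dist_eq_of_angle_eq_pi_div_three {x y z : V} (hy : ∠ x y z = π / 3)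
    (hz : ∠ x z y = π / 3) : dist x y = dist x z := by
  refine dist_eq_of_angle_eq_angle_of_angle_ne_pi (hy.trans hz.symm) fun hx => ?_
  rw [angle_eq_zero_of_angle_eq_pi_left hx] at hy
  linarith [pi_pos]

lemma false_of_forall_angle_eq_pi_div_three [FiniteDimensional ℝ V] (hV : finrank ℝ V = 2)
    {a b c d : V} (hab : a ≠ b) (hac : a ≠ c) (had : a ≠ d) (hbc : b ≠ c) (hbd : b ≠ d)
    (hcd : c ≠ d)
    (h : ∀ x ∈ ({a, b, c, d} : Set V), ∀ y ∈ ({a, b, c, d} : Set V),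
      ∀ z ∈ ({a, b, c, d} : Set V), x ≠ y → y ≠ z → x ≠ z → ∠ x y z = π / 3) :
    False := by
  have isosceles : ∀ x ∈ ({a, b, c, d} : Set V), ∀ y ∈ ({a, b, c, d} : Set V),
      ∀ z ∈ ({a, b, c, d} : Set V), x ≠ y → y ≠ z → x ≠ z → dist x y = dist x z :=
    fun x hx y hy z hz hxy hyz hxz => dist_eq_of_angle_eq_pi_div_three
      (h x hx y hy z hz hxy hyz hxz) (h x hx z hz y hy hxz hyz.symm hxy)
  refine false_of_four_equidistant hV (c := c) (d := d) hab ?_ ?_ ?_ ?_ ?_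
  · exact (isosceles a (by simp) b (by simp) c (by simp) hab hbc hac).symm
  · exact (isosceles a (by simp) b (by simp) d (by simp) hab hbd had).symm
  · rw [dist_comm a b]
    exact (isosceles b (by simp) a (by simp) c (by simp) hab.symm hac hbc).symm
  · rw [dist_comm a b]
    exact (isosceles b (by simp) a (by simp) d (by simp) hab.symm had hbd).symm
  · calc dist c d = dist c a :=
          (isosceles c (by simp) a (by simp) d (by simp) hac.symm had hcd).symm
      _ = dist a b := (dist_comm c a).trans
        (isosceles a (by simp) b (by simp) c (by simp) hab hbc hac).symm

end Plane

lemma collinear_of_subset_affineSpan {k V P : Type*} [DivisionRing k] [AddCommGroup V]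
    [Module k V] [AddTorsor V P] {s t : Set P} (hst : s ⊆ affineSpan k t) (ht : Collinear k t) :
    Collinear k s :=
  (Submodule.rank_mono ((vectorSpan_mono k hst).trans_eq (direction_affineSpan k t))).trans ht

section AngleSet

variable {S : Set Pt}

instance finite_angleSet [Finite S] : Finite (angleSet S) := by
  refine Set.Finite.subset (((Set.toFinite S).prod ((Set.toFinite S).prod (Set.toFinite S))).image
    fun t : Pt × Pt × Pt => ∠ t.1 t.2.1 t.2.2) ?_
  rintro θ ⟨-, x, hx, y, hy, z, hz, -, -, -, rfl⟩
  exact ⟨(x, y, z), ⟨hx, hy, hz⟩, rfl⟩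

lemma angle_mem_angleSet {x y z : Pt} (hx : x ∈ S) (hy : y ∈ S) (hz : z ∈ S)
    (h : ¬Collinear ℝ ({x, y, z} : Set Pt)) : ∠ x y z ∈ angleSet S :=
  ⟨⟨angle_pos_of_not_collinear h, angle_lt_pi_of_not_collinear h⟩, x, hx, y, hy, z, hz,
    ne₁₂_of_not_collinear h, ne₂₃_of_not_collinear h, ne₁₃_of_not_collinear h, rfl⟩

lemma angle_eq_pi_div_three_of_subsingleton (hS : (angleSet S).Subsingleton) {x y z : Pt}
    (hx : x ∈ S) (hy : y ∈ S) (hz : z ∈ S) (h : ¬Collinear ℝ ({x, y, z} : Set Pt)) :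
    ∠ x y z = π / 3 := by
  have hyzx : ¬Collinear ℝ ({y, z, x} : Set Pt) := by rwa [Set.pair_comm, Set.insert_comm]
  have hzxy : ¬Collinear ℝ ({z, x, y} : Set Pt) := by rwa [Set.insert_comm, Set.pair_comm]
  have hz_eq : ∠ y z x = ∠ x y z :=
    hS (angle_mem_angleSet hy hz hx hyzx) (angle_mem_angleSet hx hy hz h)
  have hx_eq : ∠ z x y = ∠ x y z :=
    hS (angle_mem_angleSet hz hx hy hzxy) (angle_mem_angleSet hx hy hz h)
  have hsum := angle_add_angle_add_angle_eq_pi z (ne₁₂_of_not_collinear h).symm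
  linarith

lemma mem_affineSpan_pair_of_sbtw (hS : (angleSet S).Subsingleton) {x m y c : Pt}
    (hx : x ∈ S) (hm : m ∈ S) (hy : y ∈ S) (hc : c ∈ S) (hxmy : Sbtw ℝ x m y) :
    c ∈ line[ℝ, x, y] := by
  by_contra hc'
  have off_line : ∀ p ∈ line[ℝ, x, y], m ≠ p → ¬Collinear ℝ ({c, m, p} : Set Pt) :=
    fun p hp hmp hcol => hc' (affineSpan_pair_le_of_mem_of_mem hxmy.wbtw.mem_affineSpan hp
      (hcol.mem_affineSpan_of_mem_of_ne (by simp) (by simp) (by simp) hmp))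
  have hsum := angle_add_angle_eq_pi_of_angle_eq_pi c hxmy.angle₁₂₃_eq_pi
  rw [angle_eq_pi_div_three_of_subsingleton hS hc hm hx
      (off_line x (left_mem_affineSpan_pair ℝ x y) hxmy.ne_left),
    angle_eq_pi_div_three_of_subsingleton hS hc hm hy
      (off_line y (right_mem_affineSpan_pair ℝ x y) hxmy.ne_right)] at hsum
  linarith [pi_pos]

lemma collinear_of_subsingleton_of_collinear (hS : (angleSet S).Subsingleton) {x y z : Pt}
    (hx : x ∈ S) (hy : y ∈ S) (hz : z ∈ S) (hxy : x ≠ y) (hyz : y ≠ z) (hxz : x ≠ z)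
    (h : Collinear ℝ ({x, y, z} : Set Pt)) : Collinear ℝ S := by
  refine collinear_of_subset_affineSpan (fun c hc => ?_) h
  have line_le {p q : Pt} (hp : p ∈ ({x, y, z} : Set Pt)) (hq : q ∈ ({x, y, z} : Set Pt)) :
      line[ℝ, p, q] ≤ affineSpan ℝ {x, y, z} :=
    affineSpan_pair_le_of_mem_of_mem (mem_affineSpan ℝ hp) (mem_affineSpan ℝ hq)
  rcases h.wbtw_or_wbtw_or_wbtw with h | h | h
  · exact line_le (by simp) (by simp)
      (mem_affineSpan_pair_of_sbtw hS hx hy hz hc ⟨h, hxy.symm, hyz⟩)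
  · exact line_le (by simp) (by simp)
      (mem_affineSpan_pair_of_sbtw hS hy hz hx hc ⟨h, hyz.symm, hxz.symm⟩)
  · exact line_le (by simp) (by simp)
      (mem_affineSpan_pair_of_sbtw hS hz hx hy hc ⟨h, hxz, hxy⟩)

end AngleSet

theorem stmt17 (a b c d : Pt)
    (hab : a ≠ b) (hac : a ≠ c) (had : a ≠ d) (hbc : b ≠ c) (hbd : b ≠ d) (hcd : c ≠ d)
    (hcol : ¬ Collinear ℝ ({a, b, c, d} : Set Pt)) :
    2 ≤ (angleSet {a, b, c, d}).ncard := by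
  refine Set.one_lt_ncard_iff_nontrivial.2 ?_
  by_contra hS
  rw [Set.not_nontrivial_iff] at hS
  refine false_of_forall_angle_eq_pi_div_three finrank_euclideanSpace_fin hab hac had hbc hbd hcd
    fun x hx y hy z hz hxy hyz hxz => angle_eq_pi_div_three_of_subsingleton hS hx hy hz ?_
  exact fun h => hcol (collinear_of_subsingleton_of_collinear hS hx hy hz hxy hyz hxz h)
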